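/- Let P be the Petersen graph, let s and t be adjacent vertices of P, and let P' = P − {s,t}. For every neighbour l of s in P with l ≠ t and every neighbour r of t in P with r ≠ s, there exists a 2-colouring of V(P') such that: each colour class has exactly 4 vertices; every monochromatic component has at most 2 vertices; among the four degree-2 vertices of P', exactly l and r receive colour 1; and moreover l has a neighbour in P' coloured 1 while r has no neighbour in P' coloured 1 (the 'left (1,1)-balanced' colouring). -/

import Mathlib

/-- Vertices of the Petersen graph: 2-element subsets of {1,...,5} (modelled as `Fin 5`). -/
abbrev PetersenVert : Type := {p : Finset (Fin 5) // p.card = 2}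

/-- The Petersen graph as the Kneser graph K(5,2): two 2-subsets are adjacent iff disjoint. -/
def Petersen : SimpleGraph PetersenVert where
  Adj a b := Disjoint a.1 b.1
  symm := ⟨fun _ _ h => Disjoint.symm h⟩
  loopless := by
    constructor
    intro a h
    have ha : a.1 = ∅ := by simpa using disjoint_self.mp h
    have := a.2
    rw [ha] at this
    simp at this

/-- The vertex set of `P' = P − {s, t}`. -/
def avoidSet (s t : PetersenVert) : Set PetersenVert := {v | v ≠ s ∧ v ≠ t}

/-- `P' = P − {s, t}`: the subgraph of the Petersen graph induced on the vertices
different from `s` and `t`. -/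
def Pminus (s t : PetersenVert) : SimpleGraph (avoidSet s t) :=
  Petersen.induce (avoidSet s t)

/-- `v` is one of the (four) vertices of degree 2 of `P' = P − {s, t}`. -/
def IsDeg2 (s t : PetersenVert) (v : avoidSet s t) : Prop :=
  ((Pminus s t).neighborSet v).ncard = 2

/-!
Write `s = {a, b}` and `t = {c, d}`, and let `m` be the fifth point. Then `l = {c, m}` and
`r = {a, m}` up to renaming `a ↔ b` and `c ↔ d`. Give colour 1 to `l` and to the three vertices
of `P'` containing `a`, colour 2 to the other four. Colour 1 then induces the single edge
`{a, d} {c, m}` plus two isolated vertices, colour 2 the single edge `{d, m} {b, c}` plus two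
isolated vertices, so every monochromatic component has at most two vertices. All the properties
of this colouring are finite statements about the 120 admissible quadruples `(s, t, l, r)`, which
the kernel checks by evaluation.
-/

namespace SimpleGraph

variable {V : Type*} {G : SimpleGraph V}

theorem Reachable.eq_or_adj_of_subsingleton_neighborSet
    (h : ∀ v, (G.neighborSet v).Subsingleton) {u v : V} (huv : G.Reachable u v) :
    u = v ∨ G.Adj u v := by
  obtain ⟨p⟩ := huv
  induction p with
  | nil => exact .inl rfl
  | cons hxy _ ih =>
    rcases ih with rfl | hyz
    · exact .inr hxy
    · exact .inl (h _ hxy.symm hyz)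

theorem ConnectedComponent.ncard_supp_le_two_of_subsingleton_neighborSet
    (h : ∀ v, (G.neighborSet v).Subsingleton) (K : G.ConnectedComponent) :
    K.supp.ncard ≤ 2 := by
  obtain ⟨u, rfl⟩ := K.exists_rep
  have hsupp : (G.connectedComponentMk u).supp ⊆ insert u (G.neighborSet u) := fun v hv =>
    ((ConnectedComponent.exact hv).symm.eq_or_adj_of_subsingleton_neighborSet h).imp Eq.symm id
  calc (G.connectedComponentMk u).supp.ncard
      ≤ (insert u (G.neighborSet u)).ncard := Set.ncard_le_ncard hsupp ((h u).finite.insert u)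
    _ ≤ (G.neighborSet u).ncard + 1 := Set.ncard_insert_le _ _
    _ ≤ 2 := by
      have := (Set.ncard_le_one_iff (h u).finite).mpr fun ha hb => h u ha hb
      omega

end SimpleGraph

instance : DecidableRel Petersen.Adj := fun a b => inferInstanceAs (Decidable (Disjoint a.1 b.1))

instance (s t : PetersenVert) : DecidablePred (· ∈ avoidSet s t) := fun v =>
  inferInstanceAs (Decidable (v ≠ s ∧ v ≠ t))

instance (s t : PetersenVert) : DecidableRel (Pminus s t).Adj := fun v w =>
  inferInstanceAs (Decidable (Petersen.Adj v w))

theorem isDeg2_iff_degree_eq_two {s t : PetersenVert} (v : avoidSet s t) :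
    IsDeg2 s t v ↔ (Pminus s t).degree v = 2 := by
  rw [IsDeg2, ← SimpleGraph.card_neighborFinset_eq_degree, ← Set.ncard_coe_finset,
    SimpleGraph.coe_neighborFinset]

def IsPoleQuadruple (s t l r : PetersenVert) : Prop :=
  Petersen.Adj s t ∧ Petersen.Adj s l ∧ l ≠ t ∧ Petersen.Adj t r ∧ r ≠ s

instance (s t l r : PetersenVert) : Decidable (IsPoleQuadruple s t l r) :=
  inferInstanceAs (Decidable (_ ∧ _))

/-- In the notation of the header, `r.1 \ l.1 = {a}`. -/
def leftColouring (l r v : PetersenVert) : Fin 2 :=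
  if v = l ∨ ¬Disjoint v.1 (r.1 \ l.1) then 0 else 1

namespace IsPoleQuadruple

theorem card_leftColouring_fibers : ∀ {s t l r : PetersenVert}, IsPoleQuadruple s t l r →
    {v : avoidSet s t | leftColouring l r v = 0}.toFinset.card = 4 ∧
    {v : avoidSet s t | leftColouring l r v = 1}.toFinset.card = 4 := by
  decide +kernel

theorem card_monochromatic_neighbors_le_one : ∀ {s t l r : PetersenVert},
    IsPoleQuadruple s t l r → ∀ u : avoidSet s t,
    (Finset.univ.filter fun w =>
      (Pminus s t).Adj u w ∧ leftColouring l r w = leftColouring l r u).card ≤ 1 := by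
  decide +kernel

theorem leftColouring_eq_zero_iff_of_degree_eq_two : ∀ {s t l r : PetersenVert},
    IsPoleQuadruple s t l r → ∀ v : avoidSet s t, (Pminus s t).degree v = 2 →
    (leftColouring l r v = 0 ↔ (v : PetersenVert) = l ∨ (v : PetersenVert) = r) := by
  decide +kernel

theorem exists_adj_left_leftColouring_eq_zero : ∀ {s t l r : PetersenVert},
    IsPoleQuadruple s t l r →
    ∃ w : avoidSet s t, Petersen.Adj l w ∧ leftColouring l r w = 0 := by
  decide +kernel

theorem leftColouring_ne_zero_of_adj_right : ∀ {s t l r : PetersenVert},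
    IsPoleQuadruple s t l r →
    ∀ w : avoidSet s t, Petersen.Adj r w → leftColouring l r w ≠ 0 := by
  decide +kernel

theorem ncard_supp_monochromatic_le_two {s t l r : PetersenVert} (hq : IsPoleQuadruple s t l r)
    (i : Fin 2) (K : ((Pminus s t).induce
      {v : avoidSet s t | leftColouring l r v = i}).ConnectedComponent) :
    K.supp.ncard ≤ 2 := by
  refine K.ncard_supp_le_two_of_subsingleton_neighborSet
    fun ⟨u, hu⟩ ⟨x, hx⟩ hux ⟨y, hy⟩ huy => Subtype.ext
      (Finset.card_le_one.mp (hq.card_monochromatic_neighbors_le_one u) x ?_ y ?_)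
  · exact Finset.mem_filter.mpr ⟨Finset.mem_univ x, hux, hx.trans hu.symm⟩
  · exact Finset.mem_filter.mpr ⟨Finset.mem_univ y, huy, hy.trans hu.symm⟩

end IsPoleQuadruple

/-- The "left (1,1)-balanced" colouring of the Petersen 4-pole: for adjacent vertices
`s, t` of the Petersen graph, `P' = P − {s,t}`, a neighbour `l` of `s` (`l ≠ t`) and a
neighbour `r` of `t` (`r ≠ s`), there is a 2-colouring of `V(P')` (colour 1 is the value
`0 : Fin 2`) with colour classes of size 4, all monochromatic components of at most 2
vertices, in which among the four degree-2 vertices exactly `l` and `r` get colour 1, and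
moreover `l` has a neighbour in `P'` coloured 1 while `r` has no neighbour in `P'`
coloured 1. -/
theorem left_one_one_balanced_colouring_exists (s t : PetersenVert) (hst : Petersen.Adj s t)
    (l r : PetersenVert) (hsl : Petersen.Adj s l) (hlt : l ≠ t)
    (htr : Petersen.Adj t r) (hrs : r ≠ s) :
    ∃ c : avoidSet s t → Fin 2,
      {v : avoidSet s t | c v = 0}.ncard = 4 ∧
      {v : avoidSet s t | c v = 1}.ncard = 4 ∧
      (∀ i : Fin 2,
        ∀ K : ((Pminus s t).induce {v | c v = i}).ConnectedComponent, K.supp.ncard ≤ 2) ∧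
      (∀ v : avoidSet s t, IsDeg2 s t v →
        (c v = 0 ↔ ((v : PetersenVert) = l ∨ (v : PetersenVert) = r))) ∧
      (∃ w : avoidSet s t, Petersen.Adj l (w : PetersenVert) ∧ c w = 0) ∧
      (∀ w : avoidSet s t, Petersen.Adj r (w : PetersenVert) → c w ≠ 0) := by
  have hq : IsPoleQuadruple s t l r := ⟨hst, hsl, hlt, htr, hrs⟩
  obtain ⟨hcard₀, hcard₁⟩ := hq.card_leftColouring_fibers
  refine ⟨fun v => leftColouring l r v, ?_, ?_, hq.ncard_supp_monochromatic_le_two,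
    fun v hv =>
      hq.leftColouring_eq_zero_iff_of_degree_eq_two v ((isDeg2_iff_degree_eq_two v).mp hv),
    hq.exists_adj_left_leftColouring_eq_zero, hq.leftColouring_ne_zero_of_adj_right⟩
  · rwa [Set.ncard_eq_toFinset_card']
  · rwa [Set.ncard_eq_toFinset_card']
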